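/- Let B₁ and B₂ be n×n real matrices all of whose entries are nonnegative. Then ρ(B₁ + B₂)/2 ≤ ρ({B₁, B₂}) ≤ ρ(B₁ + B₂), i.e. the joint spectral radius of {B₁, B₂} lies between half the spectral radius of the sum B₁ + B₂ and the spectral radius of the sum B₁ + B₂. -/

import Mathlib

/-- Spectral radius of a real square matrix: the largest absolute value of its
complex eigenvalues (elements of the spectrum of the complexified matrix). -/
noncomputable def specRad {n : ℕ} (A : Matrix (Fin n) (Fin n) ℝ) : ℝ :=
  sSup {r : ℝ | ∃ μ ∈ spectrum ℂ (A.map Complex.ofReal), r = ‖μ‖}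

/-- The set 𝒜^j of all products A₁A₂⋯A_j of j matrices from 𝒜. -/
def prodSet {n : ℕ} (𝒜 : Set (Matrix (Fin n) (Fin n) ℝ)) (j : ℕ) :
    Set (Matrix (Fin n) (Fin n) ℝ) :=
  {A | ∃ f : Fin j → Matrix (Fin n) (Fin n) ℝ, (∀ i, f i ∈ 𝒜) ∧ A = (List.ofFn f).prod}

/-- Joint spectral radius: ρ(𝒜) = limsup_{j→∞} (sup_{A ∈ 𝒜^j} ρ(A))^{1/j}. -/
noncomputable def jsr {n : ℕ} (𝒜 : Set (Matrix (Fin n) (Fin n) ℝ)) : ℝ :=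
  Filter.limsup
    (fun j : ℕ => (sSup (specRad '' prodSet 𝒜 j)) ^ ((1 : ℝ) / j)) Filter.atTop

/-!
Over `ℂ`, `tr (M ^ k) = ∑ m_μ μ ^ k`, summed over the eigenvalues `μ` of `M` with the (positive)
dimensions `m_μ` of the generalized eigenspaces as weights. Hence `|tr (M ^ k)| ≤ n ρ(M) ^ k`, and
conversely `tr (M ^ k) = O(r ^ k)` forces `ρ(M) ≤ r`: a polynomial vanishing at every eigenvalue
but `μ` isolates the term `m_μ μ ^ k` as a fixed combination of shifted power sums.

Upper bound: `0 ≤ A ≤ B` entrywise gives `0 ≤ tr (A ^ k) ≤ tr (B ^ k)`, hence `ρ(A) ≤ ρ(B)`, and a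
product of `j` factors from `{B₁, B₂}` lies entrywise between `0` and `(B₁ + B₂) ^ j`.

Lower bound: `(B₁ + B₂) ^ L` is the sum of the `2 ^ L` products of length `L` and `|tr A| ≤ n ρ(A)`.
If `jsr {B₁, B₂} < r`, these products eventually have `ρ ≤ r ^ L`, so
`tr ((B₁ + B₂) ^ L) = O((2 r) ^ L)` and `ρ(B₁ + B₂) ≤ 2 r`.
-/

open Filter Asymptotics Polynomial Module

theorem le_of_isBigO_pow_pow {a r : ℝ} (hr : 0 ≤ r)
    (h : (fun k : ℕ ↦ a ^ k) =O[atTop] fun k ↦ r ^ k) : a ≤ r := by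
  by_contra! hra
  refine h.not_isLittleO ?_ (isLittleO_pow_pow_of_lt_left hr hra)
  exact .of_forall fun k ↦ pow_ne_zero k (hr.trans_lt hra).ne'

theorem norm_le_of_isBigO_sum_mul_pow {𝕜 : Type*} [NormedField 𝕜] {s : Finset 𝕜} {c : 𝕜 → 𝕜}
    {μ : 𝕜} (hμ : μ ∈ s) (hc : c μ ≠ 0) {r : ℝ} (hr : 0 ≤ r)
    (h : (fun k : ℕ ↦ ∑ ν ∈ s, c ν * ν ^ k) =O[atTop] fun k ↦ r ^ k) : ‖μ‖ ≤ r := by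
  classical
  set b : ℕ → 𝕜 := fun k ↦ ∑ ν ∈ s, c ν * ν ^ k
  -- `P` vanishes on `s` except at `μ`, so it filters the term of `μ` out of the shifted sums of `b`
  set P : 𝕜[X] := ∏ ν ∈ s.erase μ, (X - C ν)
  have hPμ : P.eval μ ≠ 0 := by
    simp only [P, eval_prod, eval_sub, eval_X, eval_C]
    exact Finset.prod_ne_zero_iff.mpr fun ν hν ↦ sub_ne_zero.mpr (Finset.ne_of_mem_erase hν).symm
  have hfilter : ∀ k, ∑ j ∈ Finset.range (P.natDegree + 1), P.coeff j * b (k + j)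
      = c μ * P.eval μ * μ ^ k := by
    intro k
    have hP : ∀ ν ∈ s, ν ≠ μ → P.eval ν = 0 := fun ν hν hνμ ↦ by
      simp only [P, eval_prod, eval_sub, eval_X, eval_C]
      exact Finset.prod_eq_zero (Finset.mem_erase.mpr ⟨hνμ, hν⟩) (sub_self ν)
    calc ∑ j ∈ Finset.range (P.natDegree + 1), P.coeff j * b (k + j)
        = ∑ ν ∈ s, c ν * ν ^ k * P.eval ν := by
          simp only [b, Finset.mul_sum, eval_eq_sum_range, pow_add]
          rw [Finset.sum_comm]
          exact Finset.sum_congr rfl fun ν _ ↦ Finset.sum_congr rfl fun j _ ↦ by ring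
      _ = c μ * P.eval μ * μ ^ k := by
          rw [Finset.sum_eq_single_of_mem μ hμ fun ν hν hνμ ↦ by rw [hP ν hν hνμ, mul_zero]]
          ring
  have hshift : ∀ j, (fun k ↦ b (k + j)) =O[atTop] fun k ↦ r ^ k := fun j ↦
    (h.comp_tendsto (tendsto_add_atTop_nat j)).trans <|
      ((isBigO_refl _ _).const_mul_left (r ^ j)).congr_left fun k ↦ by
        simp only [Function.comp_apply]; ring
  have hμk : (fun k : ℕ ↦ μ ^ k) =O[atTop] fun k ↦ r ^ k := by
    rw [← isBigO_const_mul_left_iff (mul_ne_zero hc hPμ)]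
    simpa only [hfilter] using
      IsBigO.fun_sum (s := Finset.range (P.natDegree + 1))
        fun j _ ↦ (hshift j).const_mul_left (P.coeff j)
  exact le_of_isBigO_pow_pow hr (by simpa only [norm_pow] using hμk.norm_left)

namespace Module.End

theorem trace_pow_eq_pow_mul_finrank {R M : Type*} [CommRing R] [IsReduced R] [AddCommGroup M]
    [Module R M] [Module.Free R M] [Module.Finite R M] {g : End R M} {μ : R}
    (hg : IsNilpotent (g - algebraMap R _ μ)) (k : ℕ) :
    LinearMap.trace R M (g ^ k) = μ ^ k * finrank R M := by
  induction k with
  | zero => simp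
  | succ k ih =>
    rw [pow_succ, mul_eq_comp,
      LinearMap.trace_comp_eq_mul_of_commute_of_isNilpotent μ (Commute.self_pow g k).symm hg, ih]
    ring

variable {K V : Type*} [Field K] [AddCommGroup V] [Module K V] [FiniteDimensional K V]

theorem maxGenEigenspace_ne_bot_iff_mem_spectrum {f : End K V} {μ : K} :
    f.maxGenEigenspace μ ≠ ⊥ ↔ μ ∈ spectrum K f := by
  rw [← hasUnifEigenvalue_iff_mem_spectrum,
    ← hasUnifEigenvalue_iff_hasUnifEigenvalue_one (k := ⊤) (by simp)]
  rfl

variable [IsAlgClosed K]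

theorem trace_pow_eq_sum_finrank_mul_pow (f : End K V) (k : ℕ) :
    LinearMap.trace K V (f ^ k)
      = ∑ μ ∈ f.finite_spectrum.toFinset, (finrank K (f.maxGenEigenspace μ) : K) * μ ^ k := by
  classical
  have hint := DirectSum.isInternal_submodule_of_iSupIndep_of_iSup_eq_top
    f.independent_maxGenEigenspace f.iSup_maxGenEigenspace_eq_top
  have hfin : {μ | f.maxGenEigenspace μ ≠ ⊥}.Finite :=
    f.finite_spectrum.subset fun μ ↦ maxGenEigenspace_ne_bot_iff_mem_spectrum.mp
  rw [LinearMap.trace_eq_sum_trace_restrict' hint hfin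
    fun μ ↦ f.mapsTo_maxGenEigenspace_of_comm (Commute.self_pow f k) μ]
  refine Finset.sum_congr (by ext; simp [maxGenEigenspace_ne_bot_iff_mem_spectrum]) fun μ _ ↦ ?_
  have hf := f.mapsTo_maxGenEigenspace_of_comm (Commute.refl f) μ
  have hnil : IsNilpotent (f.restrict hf - algebraMap K _ μ) := by
    convert f.isNilpotent_restrict_maxGenEigenspace_sub_algebraMap μ using 1
    ext; simp; rfl
  rw [← pow_restrict k hf, trace_pow_eq_pow_mul_finrank hnil, mul_comm]

end Module.End

theorem Matrix.trace_pow_eq_sum_finrank_mul_pow {ι K : Type*} [Fintype ι] [DecidableEq ι]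
    [Field K] [IsAlgClosed K] (A : Matrix ι ι K) (k : ℕ) :
    (A ^ k).trace = ∑ μ ∈ A.finite_spectrum.toFinset,
      (finrank K (Module.End.maxGenEigenspace (toLin' A) μ) : K) * μ ^ k := by
  rw [← Matrix.trace_toLin'_eq, Matrix.toLin'_pow, Module.End.trace_pow_eq_sum_finrank_mul_pow]
  exact Finset.sum_congr (by ext; simp [Matrix.spectrum_toLin']) fun _ _ ↦ rfl

section SpectralRadius

open Matrix

variable {n : ℕ}

theorem specRad_nonneg (M : Matrix (Fin n) (Fin n) ℝ) : 0 ≤ specRad M :=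
  Real.sSup_nonneg (by rintro _ ⟨μ, -, rfl⟩; exact norm_nonneg μ)

theorem specRad_le {M : Matrix (Fin n) (Fin n) ℝ} {r : ℝ} (hr : 0 ≤ r)
    (h : ∀ μ ∈ spectrum ℂ (M.map Complex.ofReal), ‖μ‖ ≤ r) : specRad M ≤ r :=
  Real.sSup_le (by rintro _ ⟨μ, hμ, rfl⟩; exact h μ hμ) hr

theorem norm_le_specRad {M : Matrix (Fin n) (Fin n) ℝ} {μ : ℂ}
    (hμ : μ ∈ spectrum ℂ (M.map Complex.ofReal)) : ‖μ‖ ≤ specRad M := by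
  refine le_csSup ?_ ⟨μ, hμ, rfl⟩
  refine ((Matrix.finite_spectrum (M.map Complex.ofReal)).image fun ν : ℂ ↦ ‖ν‖).bddAbove.mono ?_
  rintro _ ⟨ν, hν, rfl⟩
  exact ⟨ν, hν, rfl⟩

theorem ofReal_trace_pow (M : Matrix (Fin n) (Fin n) ℝ) (k : ℕ) :
    (((M ^ k).trace : ℝ) : ℂ) = ((M.map Complex.ofReal) ^ k).trace := by
  rw [show M.map Complex.ofReal ^ k = (M ^ k).map Complex.ofReal from
    (map_pow Complex.ofRealHom.mapMatrix M k).symm]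
  simp [Matrix.trace]

theorem abs_trace_pow_le (M : Matrix (Fin n) (Fin n) ℝ) (k : ℕ) :
    |(M ^ k).trace| ≤ n * specRad M ^ k := by
  set A := M.map Complex.ofReal
  set d : ℂ → ℝ := fun μ ↦ finrank ℂ (Module.End.maxGenEigenspace (toLin' A) μ)
  have hrep : ∀ k, (((M ^ k).trace : ℝ) : ℂ)
      = ∑ μ ∈ A.finite_spectrum.toFinset, (d μ : ℂ) * μ ^ k := by
    intro k
    rw [ofReal_trace_pow, A.trace_pow_eq_sum_finrank_mul_pow]
    simp [d]
  have hd : ∑ μ ∈ A.finite_spectrum.toFinset, d μ = n := by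
    have := hrep 0
    simp only [pow_zero, trace_one, mul_one, Fintype.card_fin] at this
    exact_mod_cast this.symm
  calc |(M ^ k).trace| = ‖(((M ^ k).trace : ℝ) : ℂ)‖ := (Complex.norm_real _).symm
    _ ≤ ∑ μ ∈ A.finite_spectrum.toFinset, d μ * ‖μ‖ ^ k := by
      rw [hrep]
      refine (norm_sum_le _ _).trans_eq (Finset.sum_congr rfl fun μ _ ↦ ?_)
      simp [d]
    _ ≤ ∑ μ ∈ A.finite_spectrum.toFinset, d μ * specRad M ^ k := by
      gcongr with μ hμ
      exact norm_le_specRad (by simpa using hμ)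
    _ = n * specRad M ^ k := by rw [← Finset.sum_mul, hd]

theorem specRad_le_of_isBigO {M : Matrix (Fin n) (Fin n) ℝ} {r : ℝ} (hr : 0 ≤ r)
    (h : (fun k ↦ (M ^ k).trace) =O[atTop] fun k ↦ r ^ k) : specRad M ≤ r := by
  set A := M.map Complex.ofReal
  refine specRad_le hr fun μ hμ ↦ norm_le_of_isBigO_sum_mul_pow
    (c := fun μ ↦ (finrank ℂ (Module.End.maxGenEigenspace (toLin' A) μ) : ℂ))
    (A.finite_spectrum.mem_toFinset.mpr hμ) ?_ hr ?_
  · rw [Nat.cast_ne_zero, Ne, Submodule.finrank_eq_zero,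
      ← Ne, Module.End.maxGenEigenspace_ne_bot_iff_mem_spectrum, spectrum_toLin']
    exact hμ
  · refine (Complex.isBigO_ofReal_left.mpr h).congr_left fun k ↦ ?_
    rw [ofReal_trace_pow, A.trace_pow_eq_sum_finrank_mul_pow]

end SpectralRadius

section Entrywise

open Matrix Set

variable {ι R : Type*} [Fintype ι] [Semiring R] [PartialOrder R] [IsOrderedRing R]

theorem Matrix.mul_apply_mem_Icc {A A' B B' : Matrix ι ι R} (hA : ∀ i j, A i j ∈ Icc 0 (A' i j))
    (hB : ∀ i j, B i j ∈ Icc 0 (B' i j)) (i j : ι) : (A * B) i j ∈ Icc 0 ((A' * B') i j) := by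
  simp only [mul_apply]
  exact ⟨Finset.sum_nonneg fun l _ ↦ mul_nonneg (hA i l).1 (hB l j).1,
    Finset.sum_le_sum fun l _ ↦ mul_le_mul (hA i l).2 (hB l j).2 (hB l j).1
      ((hA i l).1.trans (hA i l).2)⟩

variable [DecidableEq ι]

theorem Matrix.list_prod_apply_mem_Icc {S : Matrix ι ι R} {l : List (Matrix ι ι R)}
    (hl : ∀ X ∈ l, ∀ i j, X i j ∈ Icc 0 (S i j)) (i j : ι) :
    l.prod i j ∈ Icc 0 ((S ^ l.length) i j) := by
  induction l generalizing i j with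
  | nil => by_cases hij : i = j <;> simp [hij]
  | cons X l ih =>
    rw [List.prod_cons, List.length_cons, pow_succ']
    exact mul_apply_mem_Icc (hl X List.mem_cons_self)
      (ih fun Y hY ↦ hl Y (List.mem_cons_of_mem X hY)) i j

theorem Matrix.pow_apply_mem_Icc {A B : Matrix ι ι R} (h : ∀ i j, A i j ∈ Icc 0 (B i j)) (k : ℕ)
    (i j : ι) : (A ^ k) i j ∈ Icc 0 ((B ^ k) i j) := by
  simpa using list_prod_apply_mem_Icc (l := List.replicate k A)
    (fun X hX ↦ (List.eq_of_mem_replicate hX) ▸ h) i j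

theorem Matrix.trace_pow_mem_Icc {A B : Matrix ι ι R} (h : ∀ i j, A i j ∈ Icc 0 (B i j))
    (k : ℕ) : (A ^ k).trace ∈ Icc 0 ((B ^ k).trace) :=
  ⟨Finset.sum_nonneg fun i _ ↦ (pow_apply_mem_Icc h k i i).1,
    Finset.sum_le_sum fun i _ ↦ (pow_apply_mem_Icc h k i i).2⟩

end Entrywise

section SpectralRadiusBounds

open Matrix Set

variable {n : ℕ}

theorem specRad_pow_le (M : Matrix (Fin n) (Fin n) ℝ) (t : ℕ) :
    specRad (M ^ t) ≤ specRad M ^ t := by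
  have hρ := specRad_nonneg M
  refine specRad_le_of_isBigO (pow_nonneg hρ t) (.of_bound n (.of_forall fun k ↦ ?_))
  rw [← pow_mul, ← pow_mul, Real.norm_eq_abs, Real.norm_of_nonneg (pow_nonneg hρ _)]
  exact abs_trace_pow_le M (t * k)

theorem specRad_le_specRad_of_apply_mem_Icc {A B : Matrix (Fin n) (Fin n) ℝ}
    (h : ∀ i j, A i j ∈ Icc 0 (B i j)) : specRad A ≤ specRad B := by
  refine specRad_le_of_isBigO (specRad_nonneg B) (.of_bound n (.of_forall fun k ↦ ?_))
  rw [Real.norm_of_nonneg (trace_pow_mem_Icc h k).1,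
    Real.norm_of_nonneg (pow_nonneg (specRad_nonneg B) _)]
  exact (trace_pow_mem_Icc h k).2.trans ((le_abs_self _).trans (abs_trace_pow_le B k))

theorem specRad_le_pow_of_mem_prodSet {𝒜 : Set (Matrix (Fin n) (Fin n) ℝ)}
    {S : Matrix (Fin n) (Fin n) ℝ} (h𝒜 : ∀ X ∈ 𝒜, ∀ i j, X i j ∈ Icc 0 (S i j)) {j : ℕ}
    {A : Matrix (Fin n) (Fin n) ℝ} (hA : A ∈ prodSet 𝒜 j) : specRad A ≤ specRad S ^ j := by
  obtain ⟨f, hf, rfl⟩ := hA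
  have hprod := list_prod_apply_mem_Icc (l := List.ofFn f) fun X hX ↦ by
    obtain ⟨i, rfl⟩ := List.mem_ofFn.mp hX
    exact h𝒜 _ (hf i)
  rw [List.length_ofFn] at hprod
  exact (specRad_le_specRad_of_apply_mem_Icc hprod).trans (specRad_pow_le S j)

end SpectralRadiusBounds

theorem sum_pow_eq_sum_prod_ofFn {ι R : Type*} [Fintype ι] [Semiring R] (x : ι → R) (L : ℕ) :
    (∑ i, x i) ^ L = ∑ p : Fin L → ι, (List.ofFn fun k ↦ x (p k)).prod := by
  induction L with
  | zero => simp
  | succ L ih =>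
    rw [pow_succ', ih, Finset.sum_mul_sum, ← Fintype.sum_prod_type',
      ← (Fin.consEquiv fun _ ↦ ι).sum_comp]
    simp [Fin.consEquiv, List.ofFn_succ]

theorem specRad_add_le_two_mul {n : ℕ} {B₁ B₂ : Matrix (Fin n) (Fin n) ℝ} {r : ℝ} (hr : 0 ≤ r)
    (h : ∀ᶠ L in atTop, ∀ A ∈ prodSet {B₁, B₂} L, specRad A ≤ r ^ L) :
    specRad (B₁ + B₂) ≤ 2 * r := by
  refine specRad_le_of_isBigO (by positivity) (.of_bound n ?_)
  filter_upwards [h] with L hL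
  set x : Bool → Matrix (Fin n) (Fin n) ℝ := fun b ↦ bif b then B₁ else B₂
  have hword : ∀ p : Fin L → Bool, (List.ofFn fun k ↦ x (p k)).prod ∈ prodSet {B₁, B₂} L :=
    fun p ↦ ⟨_, fun k ↦ by cases p k <;> simp [x], rfl⟩
  have hsum : B₁ + B₂ = ∑ b, x b := by simp [x]
  calc ‖((B₁ + B₂) ^ L).trace‖
      = |∑ p : Fin L → Bool, (List.ofFn fun k ↦ x (p k)).prod.trace| := by
        rw [hsum, sum_pow_eq_sum_prod_ofFn, Matrix.trace_sum, Real.norm_eq_abs]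
    _ ≤ ∑ _p : Fin L → Bool, n * r ^ L := by
        refine (Finset.abs_sum_le_sum_abs _ _).trans (Finset.sum_le_sum fun p _ ↦ ?_)
        calc _ ≤ n * specRad (List.ofFn fun k ↦ x (p k)).prod := by
              simpa using abs_trace_pow_le (List.ofFn fun k ↦ x (p k)).prod 1
          _ ≤ n * r ^ L := by gcongr; exact hL _ (hword p)
    _ = n * ‖(2 * r) ^ L‖ := by
        rw [Finset.sum_const, Finset.card_univ, Fintype.card_fun, Fintype.card_bool,
          Fintype.card_fin, Real.norm_of_nonneg (by positivity), nsmul_eq_mul, mul_pow]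
        push_cast
        ring

section JointSpectralRadius

variable {n : ℕ}

noncomputable def jsrSeq (𝒜 : Set (Matrix (Fin n) (Fin n) ℝ)) (j : ℕ) : ℝ :=
  sSup (specRad '' prodSet 𝒜 j) ^ ((1 : ℝ) / j)

variable {𝒜 : Set (Matrix (Fin n) (Fin n) ℝ)}

theorem jsr_eq_limsup_jsrSeq : jsr 𝒜 = limsup (jsrSeq 𝒜) atTop := rfl

theorem sSup_specRad_prodSet_nonneg (j : ℕ) : 0 ≤ sSup (specRad '' prodSet 𝒜 j) :=
  Real.sSup_nonneg (by rintro _ ⟨A, -, rfl⟩; exact specRad_nonneg A)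

theorem jsrSeq_nonneg (j : ℕ) : 0 ≤ jsrSeq 𝒜 j :=
  Real.rpow_nonneg (sSup_specRad_prodSet_nonneg j) _

theorem jsrSeq_le_iff {j : ℕ} (hj : j ≠ 0) {r : ℝ} (hr : 0 ≤ r) :
    jsrSeq 𝒜 j ≤ r ↔ sSup (specRad '' prodSet 𝒜 j) ≤ r ^ j := by
  rw [jsrSeq, one_div, Real.rpow_inv_le_iff_of_pos (sSup_specRad_prodSet_nonneg j) hr
    (by positivity), Real.rpow_natCast]

section Bounded

variable {R : ℝ} (hR : 0 ≤ R) (hbound : ∀ j, ∀ A ∈ prodSet 𝒜 j, specRad A ≤ R ^ j)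
include hR hbound

theorem eventually_jsrSeq_le : ∀ᶠ j in atTop, jsrSeq 𝒜 j ≤ R := by
  filter_upwards [eventually_ne_atTop 0] with j hj
  exact (jsrSeq_le_iff hj hR).mpr (Real.sSup_le (by rintro _ ⟨A, hA, rfl⟩; exact hbound j A hA)
    (pow_nonneg hR j))

theorem isBoundedUnder_jsrSeq : IsBoundedUnder (· ≤ ·) atTop (jsrSeq 𝒜) :=
  isBoundedUnder_of_eventually_le (eventually_jsrSeq_le hR hbound)

theorem jsr_le : jsr 𝒜 ≤ R := by
  rw [jsr_eq_limsup_jsrSeq]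
  exact limsup_le_of_le (isCoboundedUnder_le_of_le atTop jsrSeq_nonneg)
    (eventually_jsrSeq_le hR hbound)

theorem jsr_nonneg : 0 ≤ jsr 𝒜 := by
  rw [jsr_eq_limsup_jsrSeq]
  exact le_limsup_of_frequently_le (Eventually.of_forall jsrSeq_nonneg).frequently
    (isBoundedUnder_jsrSeq hR hbound)

theorem eventually_specRad_le_pow_of_jsr_lt {r : ℝ} (hr : jsr 𝒜 < r) :
    ∀ᶠ j in atTop, ∀ A ∈ prodSet 𝒜 j, specRad A ≤ r ^ j := by
  rw [jsr_eq_limsup_jsrSeq] at hr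
  filter_upwards [eventually_lt_of_limsup_lt hr (isBoundedUnder_jsrSeq hR hbound),
    eventually_ne_atTop 0] with j hjr hj A hA
  have hbdd : BddAbove (specRad '' prodSet 𝒜 j) :=
    ⟨R ^ j, by rintro _ ⟨B, hB, rfl⟩; exact hbound j B hB⟩
  calc specRad A ≤ sSup (specRad '' prodSet 𝒜 j) := le_csSup hbdd ⟨A, hA, rfl⟩
    _ ≤ r ^ j := (jsrSeq_le_iff hj ((jsrSeq_nonneg j).trans hjr.le)).mp hjr.le

end Bounded

end JointSpectralRadius

/-- For matrices with nonnegative entries,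
ρ(B₁ + B₂)/2 ≤ ρ({B₁, B₂}) ≤ ρ(B₁ + B₂). -/
theorem jsr_nonneg_entries_bounds {n : ℕ}
    (B₁ B₂ : Matrix (Fin n) (Fin n) ℝ)
    (h₁ : ∀ i j, 0 ≤ B₁ i j) (h₂ : ∀ i j, 0 ≤ B₂ i j) :
    specRad (B₁ + B₂) / 2 ≤ jsr {B₁, B₂} ∧ jsr {B₁, B₂} ≤ specRad (B₁ + B₂) := by
  have hρ := specRad_nonneg (B₁ + B₂)
  have hbound : ∀ j, ∀ A ∈ prodSet {B₁, B₂} j, specRad A ≤ specRad (B₁ + B₂) ^ j := by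
    refine fun j A hA ↦ specRad_le_pow_of_mem_prodSet ?_ hA
    rintro X (rfl | rfl) i j
    · exact ⟨h₁ i j, le_add_of_nonneg_right (h₂ i j)⟩
    · exact ⟨h₂ i j, le_add_of_nonneg_left (h₁ i j)⟩
  refine ⟨?_, jsr_le hρ hbound⟩
  by_contra! hlt
  obtain ⟨r, hjr, hr⟩ := exists_between hlt
  have := specRad_add_le_two_mul ((jsr_nonneg hρ hbound).trans hjr.le)
    (eventually_specRad_le_pow_of_jsr_lt hρ hbound hjr)
  linarith
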